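/- Let k ≥ 4. The number of natural numbers N such that N and N + 2 both lie in [5, 4 + ∏_{i=1}^{k−1} P_i], both N and N + 2 are coprime to ∏_{i=1}^{k−1} P_i, and P_k divides N or N + 2, is at most 2·∏_{i=2}^{k−2} (P_i − 2). -/

import Mathlib

/-- `P i` is the `i`-th prime number (1-indexed): `P 1 = 2`, `P 2 = 3`, `P 3 = 5`, ... -/
noncomputable def P (i : ℕ) : ℕ := Nat.nth Nat.Prime (i - 1)

/-- The `k`-th primorial, `∏_{i=1}^{k} P_i`. -/
noncomputable def primor (k : ℕ) : ℕ := ∏ i ∈ Finset.Icc 1 k, P i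

/-!
`N` ranges over a window of length `∏_{i<k} P_i < P_k ∏_{i≤k-2} P_i`, and `P_k ∣ N` or
`P_k ∣ N + 2` confines it to two residue classes mod `P_k`. By the Chinese remainder theorem, within
one class `N` is determined by its residue mod `∏_{i≤k-2} P_i`, where `(N, N + 2)` is a pair of
units. Again by the Chinese remainder theorem such pairs of units number `∏_{i=2}^{k-2} (P_i - 2)`.
-/

lemma P_prime (i : ℕ) : (P i).Prime := Nat.prime_nth_prime _

lemma P_one : P 1 = 2 := Nat.nth_prime_zero_eq_two

lemma P_lt_P {i j : ℕ} (hi : 1 ≤ i) (hij : i < j) : P i < P j :=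
  (Nat.nth_lt_nth Nat.infinite_setOfPred_prime).2 (by omega)

lemma primor_one : primor 1 = 2 := by
  rw [primor, Finset.Icc_self, Finset.prod_singleton, P_one]

lemma primor_succ (k : ℕ) : primor (k + 1) = primor k * P (k + 1) :=
  Finset.prod_Icc_succ_top (by omega) _

lemma primor_pos (k : ℕ) : 0 < primor k :=
  Finset.prod_pos fun i _ => (P_prime i).pos

lemma coprime_primor_P {k j : ℕ} (h : k < j) : (primor k).Coprime (P j) :=
  Nat.Coprime.prod_left fun i hi => by
    rw [Finset.mem_Icc] at hi
    exact (Nat.coprime_primes (P_prime i) (P_prime j)).2 (P_lt_P hi.1 (by omega)).ne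

/-- In `ZMod (primor j)` these are the residues of the paper's prospective twin primes in `S_j`,
so their number is `n_j^t`. -/
def twinUnits (R : Type*) [Semiring R] : Set R := {x | IsUnit x ∧ IsUnit (x + 2)}

section twinUnits

variable {R S : Type*} [Semiring R] [Semiring S]

lemma twinUnits_prod : twinUnits (R × S) = twinUnits R ×ˢ twinUnits S := by
  ext x
  simp only [twinUnits, Set.mem_ofPred_eq, Set.mem_prod, Prod.isUnit_iff, Prod.fst_add,
    Prod.snd_add, Prod.fst_ofNat, Prod.snd_ofNat]
  tauto

lemma RingEquiv.preimage_twinUnits (e : R ≃+* S) : e ⁻¹' twinUnits S = twinUnits R := by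
  ext x
  simp only [twinUnits, Set.mem_preimage, Set.mem_ofPred_eq, ← map_ofNat e 2, ← map_add,
    isUnit_map_iff]

lemma RingEquiv.ncard_twinUnits (e : R ≃+* S) : (twinUnits R).ncard = (twinUnits S).ncard := by
  rw [← e.preimage_twinUnits, Set.ncard_preimage_of_injective_subset_range e.injective
    (by simp [e.surjective.range_eq])]

lemma twinUnits_eq_compl {F : Type*} [DivisionRing F] : twinUnits F = {0, -2}ᶜ := by
  ext x
  simp [twinUnits, eq_neg_iff_add_eq_zero]

end twinUnits

lemma ncard_twinUnits_zmod_mul {a b : ℕ} (h : a.Coprime b) :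
    (twinUnits (ZMod (a * b))).ncard =
      (twinUnits (ZMod a)).ncard * (twinUnits (ZMod b)).ncard := by
  rw [(ZMod.chineseRemainder h).ncard_twinUnits, twinUnits_prod, Set.ncard_prod]

lemma ncard_twinUnits_zmod_two : (twinUnits (ZMod 2)).ncard = 1 := by
  rw [twinUnits_eq_compl, Set.ncard_compl, show (-2 : ZMod 2) = 0 by decide, Set.pair_eq_singleton,
    Set.ncard_singleton, Nat.card_zmod]

lemma ncard_twinUnits_zmod_prime {p : ℕ} [Fact p.Prime] (hp : p ≠ 2) :
    (twinUnits (ZMod p)).ncard = p - 2 := by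
  have h2 : (2 : ZMod p) ≠ 0 := fun h =>
    hp <| (Nat.prime_dvd_prime_iff_eq Fact.out Nat.prime_two).1
      ((ZMod.natCast_eq_zero_iff 2 p).1 (by exact_mod_cast h))
  rw [twinUnits_eq_compl, Set.ncard_compl, Set.ncard_pair (by simpa [eq_comm] using h2),
    Nat.card_zmod]

lemma ncard_twinUnits_primor {m : ℕ} (hm : 1 ≤ m) :
    (twinUnits (ZMod (primor m))).ncard = ∏ i ∈ Finset.Icc 2 m, (P i - 2) := by
  induction m, hm using Nat.le_induction with
  | base =>
    rw [primor_one, ncard_twinUnits_zmod_two, Finset.Icc_eq_empty (by omega), Finset.prod_empty]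
  | succ n hn ih =>
    have : Fact (P (n + 1)).Prime := ⟨P_prime _⟩
    have h2 : P (n + 1) ≠ 2 := P_one ▸ (P_lt_P (i := 1) le_rfl (by omega)).ne'
    rw [primor_succ, ncard_twinUnits_zmod_mul (coprime_primor_P (by omega)), ih,
      ncard_twinUnits_zmod_prime h2, Finset.prod_Icc_succ_top (by omega)]

lemma natCast_mem_twinUnits_iff {m N : ℕ} :
    (N : ZMod m) ∈ twinUnits (ZMod m) ↔ N.Coprime m ∧ (N + 2).Coprime m := by
  rw [twinUnits, Set.mem_ofPred_eq, ← ZMod.isUnit_iff_coprime, ← ZMod.isUnit_iff_coprime,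
    Nat.cast_add, Nat.cast_ofNat]

lemma Nat.ModEq.eq_of_mem_Ico {a c N N' : ℕ} (h : N ≡ N' [MOD c])
    (hN : N ∈ Finset.Ico a (a + c)) (hN' : N' ∈ Finset.Ico a (a + c)) : N = N' := by
  rw [Finset.mem_Ico] at hN hN'
  have h' : N - a ≡ N' - a [MOD c] :=
    Nat.ModEq.add_right_cancel' a (by rwa [Nat.sub_add_cancel hN.1, Nat.sub_add_cancel hN'.1])
  have := h'.eq_of_lt_of_lt (by omega) (by omega)
  omega

lemma Nat.modEq_of_dvd_add {n c N N' : ℕ} (h : n ∣ N + c) (h' : n ∣ N' + c) :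
    N ≡ N' [MOD n] :=
  Nat.ModEq.add_right_cancel' c
    ((Nat.modEq_zero_iff_dvd.2 h).trans (Nat.modEq_zero_iff_dvd.2 h').symm)

lemma card_le_ncard_twinUnits {m n a : ℕ} [NeZero m] (hmn : m.Coprime n) {s : Finset ℕ}
    (hs : ∀ N ∈ s, N ∈ Finset.Ico a (a + m * n) ∧ N.Coprime m ∧ (N + 2).Coprime m)
    (hmod : ∀ N ∈ s, ∀ N' ∈ s, N ≡ N' [MOD n]) :
    s.card ≤ (twinUnits (ZMod m)).ncard := by
  rw [← Set.ncard_coe_finset]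
  refine Set.ncard_le_ncard_of_injOn (fun N : ℕ => (N : ZMod m))
    (fun N hN => natCast_mem_twinUnits_iff.2 (hs N hN).2) (fun N hN N' hN' hNN' => ?_)
    (Set.toFinite _)
  have hm : N ≡ N' [MOD m] := (ZMod.natCast_eq_natCast_iff _ _ _).1 hNN'
  exact ((Nat.modEq_and_modEq_iff_modEq_mul hmn).1 ⟨hm, hmod N hN N' hN'⟩).eq_of_mem_Ico
    (hs N hN).1 (hs N' hN').1

open scoped Classical in
/-- For `k ≥ 4`, the number of naturals `N` with `N` and `N + 2` both
in `[5, 4 + ∏_{i=1}^{k-1} P_i]`, both coprime to `∏_{i=1}^{k-1} P_i`, and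
`P_k ∣ N` or `P_k ∣ N + 2`, is at most `2·∏_{i=2}^{k-2}(P_i - 2)`. -/
theorem twin_primes_with_factor_Pk_bound (k : ℕ) (hk : 4 ≤ k) :
    ((Finset.Icc 5 (4 + primor (k - 1))).filter
      (fun N => N + 2 ∈ Finset.Icc 5 (4 + primor (k - 1)) ∧
        Nat.Coprime N (primor (k - 1)) ∧ Nat.Coprime (N + 2) (primor (k - 1)) ∧
        (P k ∣ N ∨ P k ∣ N + 2))).card
      ≤ 2 * ∏ i ∈ Finset.Icc 2 (k - 2), (P i - 2) := by
  set M := primor (k - 2)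
  have : NeZero M := ⟨(primor_pos _).ne'⟩
  have hsucc : primor (k - 1) = M * P (k - 1) := by
    rw [show k - 1 = k - 2 + 1 by omega]; exact primor_succ _
  have hlt : primor (k - 1) < M * P k := by
    rw [hsucc]; exact Nat.mul_lt_mul_of_pos_left (P_lt_P (by omega) (by omega)) (primor_pos _)
  set T := (Finset.Icc 5 (4 + primor (k - 1))).filter
      (fun N => N + 2 ∈ Finset.Icc 5 (4 + primor (k - 1)) ∧
        Nat.Coprime N (primor (k - 1)) ∧ Nat.Coprime (N + 2) (primor (k - 1)) ∧
        (P k ∣ N ∨ P k ∣ N + 2))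
  have hclass (c : ℕ) : (T.filter (P k ∣ · + c)).card ≤ (twinUnits (ZMod M)).ncard := by
    refine card_le_ncard_twinUnits (m := M) (a := 5) (coprime_primor_P (show k - 2 < k by omega))
      (fun N hN => ?_) (fun N hN N' hN' => ?_)
    · obtain ⟨hI, -, hc, hc2, -⟩ := Finset.mem_filter.1 (Finset.mem_filter.1 hN).1
      have hdvd : M ∣ primor (k - 1) := hsucc ▸ dvd_mul_right _ _
      rw [Finset.mem_Icc] at hI
      exact ⟨Finset.mem_Ico.2 ⟨hI.1, by omega⟩, hc.coprime_dvd_right hdvd,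
        hc2.coprime_dvd_right hdvd⟩
    · exact Nat.modEq_of_dvd_add (Finset.mem_filter.1 hN).2 (Finset.mem_filter.1 hN').2
  have hsplit : T ⊆ T.filter (P k ∣ · + 0) ∪ T.filter (P k ∣ · + 2) := fun N hN => by
    simpa [hN] using (Finset.mem_filter.1 hN).2.2.2.2
  calc T.card ≤ (T.filter (P k ∣ · + 0)).card + (T.filter (P k ∣ · + 2)).card :=
        (Finset.card_le_card hsplit).trans (Finset.card_union_le _ _)
    _ ≤ 2 * (twinUnits (ZMod M)).ncard := by linarith [hclass 0, hclass 2]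
    _ = 2 * ∏ i ∈ Finset.Icc 2 (k - 2), (P i - 2) := by rw [ncard_twinUnits_primor (by omega)]
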